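/- arXiv:1611.00114 — 7 statements merged into one kernel-verified Lean document; each statement's English description precedes it below -/
import Mathlib

section
/- Let E be a real vector space, C ⊆ E a convex set, and F ⊆ C a face of C (i.e. whenever a convex combination of finitely many points of C lies in F, all those points lie in F). Then F = C ∩ aff(F), where aff(F) denotes the affine hull of F. -/
open Finset

/-- `F` is a face of the convex set `C`: `F` is a convex subset of `C` such that whenever a
convex combination (with positive weights) of finitely many points of `C` lies in `F`, all of
those points lie in `F`. -/
def IsFaceOf {E : Type*} [AddCommGroup E] [Module ℝ E] (C F : Set E) : Prop :=
  Convex ℝ F ∧ F ⊆ C ∧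
    ∀ (n : ℕ) (c : Fin n → E) (t : Fin n → ℝ),
      (∀ i, c i ∈ C) → (∀ i, 0 < t i) → (∑ i, t i = 1) →
      (∑ i, t i • c i) ∈ F → ∀ i, c i ∈ F

/-- If `F` is a face of a convex set `C`, then `F = C ∩ aff F`. -/
theorem face_eq_inter_affineSpan {E : Type*} [AddCommGroup E] [Module ℝ E]
    (C F : Set E) (hC : Convex ℝ C) (hF : IsFaceOf C F) :
    F = C ∩ (affineSpan ℝ F : Set E) := by

  obtain ⟨hFconv, hFC, hface⟩ := hF
  apply Set.Subset.antisymm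
  · exact fun x hx => ⟨hFC hx, subset_affineSpan ℝ F hx⟩
  · rintro x ⟨hxC, hxA⟩
    rw [← Subtype.range_coe (s := F)] at hxA
    obtain ⟨fs, w, hw, hx⟩ := eq_affineCombination_of_mem_affineSpan hxA
    rw [fs.affineCombination_eq_linear_combination _ _ hw] at hx
    set f : F → E := Subtype.val with hf
    set pos : F → ℝ := fun i => max (w i) 0 with hpos
    set neg : F → ℝ := fun i => max (-w i) 0 with hneg
    have hwpn : ∀ i, w i = pos i - neg i := by
      intro i
      rcases le_total (w i) 0 with h | h
      · simp [hpos, hneg, max_eq_right h, max_eq_left (neg_nonneg.2 h)]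
      · simp [hpos, hneg, max_eq_left h, max_eq_right (neg_nonpos.2 h)]
    have hposnn : ∀ i, 0 ≤ pos i := fun i => le_max_right _ _
    have hnegnn : ∀ i, 0 ≤ neg i := fun i => le_max_right _ _
    set s : ℝ := ∑ i ∈ fs, neg i with hs
    have hs0 : 0 ≤ s := Finset.sum_nonneg fun i _ => hnegnn i
    have hpossum : ∑ i ∈ fs, pos i = 1 + s := by
      have : ∑ i ∈ fs, w i = ∑ i ∈ fs, pos i - ∑ i ∈ fs, neg i := by
        rw [← Finset.sum_sub_distrib]
        exact Finset.sum_congr rfl fun i _ => hwpn i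
      rw [hw] at this; linarith
    have key : x + ∑ i ∈ fs, neg i • f i = ∑ i ∈ fs, pos i • f i := by
      rw [hx, ← Finset.sum_add_distrib]
      refine Finset.sum_congr rfl fun i _ => ?_
      rw [hwpn i, sub_smul]; abel
    have hmemF : ∀ i : F, f i ∈ F := fun i => i.2
    rcases eq_or_lt_of_le hs0 with hseq | hslt
    · -- s = 0 : all weights nonneg
      have hneg0 : ∀ i ∈ fs, neg i = 0 :=
        (Finset.sum_eq_zero_iff_of_nonneg fun i _ => hnegnn i).1 hseq.symm
      have : x = ∑ i ∈ fs, pos i • f i := by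
        rw [hx]
        exact Finset.sum_congr rfl fun i hi => by rw [hwpn i, hneg0 i hi, sub_zero]
      rw [this]
      have h1 : ∑ i ∈ fs, pos i = 1 := by rw [hpossum, ← hseq, add_zero]
      exact hFconv.sum_mem (fun i _ => hposnn i) h1 (fun i _ => hmemF i)
    · -- s > 0
      have h1s : (0:ℝ) < 1 + s := by linarith
      set z : E := ∑ i ∈ fs, (neg i / s) • f i with hz
      have hzF : z ∈ F := by
        refine hFconv.sum_mem (fun i _ => div_nonneg (hnegnn i) hs0) ?_ (fun i _ => hmemF i)
        · rw [← Finset.sum_div, ← hs, div_self hslt.ne']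
      have hmF : (∑ i ∈ fs, (pos i / (1 + s)) • f i) ∈ F := by
        refine hFconv.sum_mem (fun i _ => div_nonneg (hposnn i) h1s.le) ?_ (fun i _ => hmemF i)
        · rw [← Finset.sum_div, hpossum, div_self h1s.ne']
      have hcomb : (1 + s)⁻¹ • x + (s / (1 + s)) • z ∈ F := by
        have hsz : s • z = ∑ i ∈ fs, neg i • f i := by
          rw [hz, Finset.smul_sum]
          exact Finset.sum_congr rfl fun i _ => by
            rw [smul_smul]; congr 1; field_simp
        have : (1 + s)⁻¹ • x + (s / (1 + s)) • z
            = ∑ i ∈ fs, (pos i / (1 + s)) • f i := by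
          rw [div_eq_mul_inv, mul_comm, mul_smul, ← smul_add, hsz, key, Finset.smul_sum]
          exact Finset.sum_congr rfl fun i _ => by
            rw [smul_smul, div_eq_mul_inv, mul_comm]
        rw [this]; exact hmF
      have := hface 2 ![x, z] ![(1 + s)⁻¹, s / (1 + s)]
        (fun i => by fin_cases i <;> simp [hxC, hFC hzF])
        (fun i => by fin_cases i <;> simp [inv_pos.2 h1s, div_pos hslt h1s])
        (by simp [Fin.sum_univ_two]; field_simp)
        (by simpa [Fin.sum_univ_two] using hcomb) 0
      simpa using this
end

section
/- Let E be a real vector space, C ⊆ E convex, F a face of C, and λ ∈ F. Then the tangent cone T_λ(F) is a face of the tangent cone T_λ(C), where T_λ(C) is the union of the rays λ + ℝ≥0·(c − λ) over all c ∈ C. -/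
open Finset

/-- The tangent cone of `C` at `x`: the union of the rays `x + ℝ≥0 • (c - x)` over `c ∈ C`. -/
def tanConeAt {E : Type*} [AddCommGroup E] [Module ℝ E] (C : Set E) (x : E) : Set E :=
  {y | ∃ c ∈ C, ∃ t : ℝ, 0 ≤ t ∧ y = x + t • (c - x)}

/-!
Shrinking towards `λ` by a small factor `δ > 0` (the homothety `y ↦ λ + δ • (y - λ)`) maps any
finitely many points of `T_λ C` into `C`, preserves convex combinations and the cone `T_λ F`, and
a point is in `T_λ F` as soon as its image is in `F`. A point of `C` lying in `T_λ F` is already in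
`F`: either it lies on the segment from `λ` to a point of `F`, or a point of `F` lies strictly
between it and `λ`. So a convex combination in `T_λ F` of points of `T_λ C` becomes, after
shrinking, a convex combination in `F` of points of `C`, and the face property of `F` applies.
-/

open Filter Topology

section

variable {E : Type*} [AddCommGroup E] [Module ℝ E]

lemma tanConeAt_mono {S T : Set E} (hST : S ⊆ T) (x : E) : tanConeAt S x ⊆ tanConeAt T x := by
  rintro y ⟨c, hc, t, ht, rfl⟩
  exact ⟨c, hST hc, t, ht, rfl⟩

lemma add_smul_sub_mem_tanConeAt {S : Set E} {x y : E} (hy : y ∈ tanConeAt S x) {δ : ℝ}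
    (hδ : 0 ≤ δ) : x + δ • (y - x) ∈ tanConeAt S x := by
  obtain ⟨c, hc, t, ht, rfl⟩ := hy
  exact ⟨c, hc, δ * t, mul_nonneg hδ ht, by module⟩

lemma mem_tanConeAt_of_add_smul_sub_mem {S : Set E} {x y : E} {δ : ℝ} (hδ : 0 < δ)
    (h : x + δ • (y - x) ∈ S) : y ∈ tanConeAt S x :=
  ⟨_, h, δ⁻¹, inv_nonneg.2 hδ.le, by
    rw [add_sub_cancel_left, smul_smul, inv_mul_cancel₀ hδ.ne', one_smul, add_sub_cancel]⟩

lemma Convex.eventually_add_smul_sub_mem {S : Set E} (hS : Convex ℝ S) {x y : E} (hx : x ∈ S)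
    (hy : y ∈ tanConeAt S x) : ∀ᶠ δ in 𝓝[>] (0 : ℝ), x + δ • (y - x) ∈ S := by
  obtain ⟨c, hc, t, ht, rfl⟩ := hy
  have hsmall : ∀ᶠ δ in 𝓝[>] (0 : ℝ), δ * t < 1 := by
    have : Tendsto (fun δ : ℝ => δ * t) (𝓝[>] 0) (𝓝 0) :=
      ((continuous_mul_const t).tendsto' 0 0 (zero_mul t)).mono_left nhdsWithin_le_nhds
    exact this.eventually (eventually_lt_nhds one_pos)
  filter_upwards [hsmall, self_mem_nhdsWithin] with δ hδt hδ
  have : x + δ • (x + t • (c - x) - x) = x + (δ * t) • (c - x) := by module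
  rw [this]
  exact hS.add_smul_sub_mem hx hc ⟨mul_nonneg hδ.le ht, hδt.le⟩

lemma add_smul_sub_sum_smul {ι : Type*} (s : Finset ι) (x : E) (δ : ℝ) (t : ι → ℝ) (c : ι → E)
    (ht : ∑ i ∈ s, t i = 1) :
    x + δ • (∑ i ∈ s, t i • c i - x) = ∑ i ∈ s, t i • (x + δ • (c i - x)) := by
  have hterm : ∀ i, t i • (x + δ • (c i - x)) = t i • x + δ • (t i • c i) - δ • (t i • x) :=
    fun i => by module
  simp only [hterm, Finset.sum_sub_distrib, Finset.sum_add_distrib, ← Finset.smul_sum,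
    ← Finset.sum_smul, ht, one_smul]
  module

lemma Convex.tanConeAt {S : Set E} (hS : Convex ℝ S) {x : E} (hx : x ∈ S) :
    Convex ℝ (tanConeAt S x) := by
  intro y₁ hy₁ y₂ hy₂ a b ha hb hab
  obtain ⟨δ, h₁, h₂, hδ⟩ := ((hS.eventually_add_smul_sub_mem hx hy₁).and
    ((hS.eventually_add_smul_sub_mem hx hy₂).and self_mem_nhdsWithin)).exists
  refine mem_tanConeAt_of_add_smul_sub_mem hδ ?_
  have : x + δ • (a • y₁ + b • y₂ - x) =
      a • (x + δ • (y₁ - x)) + b • (x + δ • (y₂ - x)) := by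
    rw [eq_sub_of_add_eq hab]; module
  rw [this]
  exact hS h₁ h₂ ha hb hab

lemma IsFaceOf.mem_of_mem_tanConeAt {C F : Set E} (hF : IsFaceOf C F) {x p : E} (hx : x ∈ F)
    (hpC : p ∈ C) (hpF : p ∈ tanConeAt F x) : p ∈ F := by
  obtain ⟨f, hf, r, hr, rfl⟩ := hpF
  rcases le_or_gt r 1 with hr1 | hr1
  · exact hF.1.add_smul_sub_mem hx hf ⟨hr, hr1⟩
  have hr0 : 0 < r := one_pos.trans hr1
  have hcomb : (1 - r⁻¹) • x + r⁻¹ • (x + r • (f - x)) = f := by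
    rw [smul_add, smul_smul, inv_mul_cancel₀ hr0.ne']; module
  have hw : ∀ i, 0 < ![1 - r⁻¹, r⁻¹] i := by
    intro i; fin_cases i
    · simpa using inv_lt_one_of_one_lt₀ hr1
    · simpa using hr0
  simpa using hF.2.2 2 ![x, x + r • (f - x)] ![1 - r⁻¹, r⁻¹]
    (fun i => by fin_cases i <;> simp [hF.2.1 hx, hpC]) hw (by simp)
    (by simpa only [Fin.sum_univ_two, Matrix.cons_val_zero, Matrix.cons_val_one,
      Matrix.head_cons, hcomb] using hf) 1

end

/-- If `F` is a face of a convex set `C` and `λ ∈ F`, then the tangent cone `T_λ F` is a face of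
the tangent cone `T_λ C`. -/
theorem tangentCone_face {E : Type*} [AddCommGroup E] [Module ℝ E]
    (C F : Set E) (hC : Convex ℝ C) (hF : IsFaceOf C F) (lam : E) (hlam : lam ∈ F) :
    IsFaceOf (tanConeAt C lam) (tanConeAt F lam) := by
  refine ⟨hF.1.tanConeAt hlam, tanConeAt_mono hF.2.1 lam, ?_⟩
  intro n c t hc ht ht1 hsum
  have hlamC : lam ∈ C := hF.2.1 hlam
  obtain ⟨δ, hδC, hδ⟩ := ((eventually_all.2 fun i =>
    hC.eventually_add_smul_sub_mem hlamC (hc i)).and self_mem_nhdsWithin).exists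
  have hsumF : ∑ i, t i • (lam + δ • (c i - lam)) ∈ F := by
    rw [← add_smul_sub_sum_smul _ _ _ _ _ ht1]
    refine hF.mem_of_mem_tanConeAt hlam ?_ (add_smul_sub_mem_tanConeAt hsum hδ.le)
    rw [add_smul_sub_sum_smul _ _ _ _ _ ht1]
    exact hC.sum_mem (fun i _ => (ht i).le) ht1 fun i _ => hδC i
  exact fun i => mem_tanConeAt_of_add_smul_sub_mem hδ (hF.2.2 n _ t hδC ht ht1 hsumF i)
end

section
/- Let E be a real vector space, C ⊆ E convex, and a, b ∈ C distinct points such that the segment [a,b] can be slightly extended in C past b, i.e. a + (1+ε)(b−a) ∈ C for some ε > 0. Then the tangent cone T_a(C) is contained in the tangent cone T_b(C). -/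
/-- If `a ≠ b` lie in a convex set `C` and the segment `[a,b]` can be slightly extended within
`C` past `b`, then `T_a C ⊆ T_b C`. -/
theorem tangentCone_mono_of_extension {E : Type*} [AddCommGroup E] [Module ℝ E]
    (C : Set E) (hC : Convex ℝ C) (a b : E) (ha : a ∈ C) (hb : b ∈ C) (hab : a ≠ b)
    (hext : ∃ ε : ℝ, 0 < ε ∧ a + (1 + ε) • (b - a) ∈ C) :
    tanConeAt C a ⊆ tanConeAt C b := by
  obtain ⟨ε, hε, hd⟩ := hext
  rintro y ⟨c, hc, t, ht, rfl⟩
  by_cases h1 : t ≤ 1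
  · refine ⟨t • c + (1 - t) • a, hC hc ha ht (by linarith) (by ring), 1, zero_le_one, ?_⟩
    match_scalars <;> ring
  · push_neg at h1
    have hD : 0 < t * (1 + ε) - 1 := by nlinarith
    have hl0 : 0 ≤ t * ε / (t * (1 + ε) - 1) := by positivity
    have hl1 : t * ε / (t * (1 + ε) - 1) ≤ 1 := by
      rw [div_le_one hD]; nlinarith
    refine ⟨(t * ε / (t * (1 + ε) - 1)) • c +
        (1 - t * ε / (t * (1 + ε) - 1)) • (a + (1 + ε) • (b - a)),
      hC hc hd hl0 (by linarith) (by ring), (t * (1 + ε) - 1) / ε, by positivity, ?_⟩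
    have hε' : ε ≠ 0 := hε.ne'
    have hD' : t * (1 + ε) - 1 ≠ 0 := hD.ne'
    match_scalars <;> field_simp <;> ring
end

section
/- Every point of a rational polyhedron in ℝⁿ is a convex combination of finitely many rational points of the polyhedron. -/
open Finset

theorem aux_box (n : ℕ) (x : Fin n → ℝ) (ε : ℝ) (hε : 0 < ε) :
    ∃ (k : ℕ) (p : Fin k → Fin n → ℚ) (w : Fin k → ℝ),
      (∀ l i, |(p l i : ℝ) - x i| ≤ ε) ∧ (∀ l, 0 ≤ w l) ∧ (∑ l, w l = 1) ∧
      x = ∑ l, w l • fun i => ((p l i : ℝ)) := by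
  induction n with
  | zero =>
    refine ⟨1, fun _ => Fin.elim0, fun _ => 1, fun l i => i.elim0, fun l => zero_le_one, by simp, ?_⟩
    funext i; exact i.elim0
  | succ n IH =>
    obtain ⟨k, p, w, hnear, hw0, hw1, hxeq⟩ := IH (fun i => x i.succ)
    obtain ⟨q₁, hq₁l, hq₁r⟩ := exists_rat_btwn (show x 0 - ε < x 0 by linarith)
    obtain ⟨q₂, hq₂l, hq₂r⟩ := exists_rat_btwn (show x 0 < x 0 + ε by linarith)
    have hq12 : (0:ℝ) < (q₂:ℝ) - (q₁:ℝ) := by linarith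
    set θ : ℝ := ((q₂:ℝ) - x 0) / ((q₂:ℝ) - (q₁:ℝ)) with hθdef
    have hθ0 : 0 ≤ θ := div_nonneg (by linarith) (by linarith)
    have hθ1 : θ ≤ 1 := by
      rw [div_le_one hq12]; linarith
    have hθx : θ * (q₁:ℝ) + (1 - θ) * (q₂:ℝ) = x 0 := by
      have h := div_mul_cancel₀ ((q₂:ℝ) - x 0) (ne_of_gt hq12)
      rw [hθdef]; nlinarith [h]
    refine ⟨k + k,
      Fin.append (fun l => Fin.cons q₁ (p l)) (fun l => Fin.cons q₂ (p l)),
      Fin.append (fun l => θ * w l) (fun l => (1 - θ) * w l), ?_, ?_, ?_, ?_⟩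
    · intro l i
      cases l using Fin.addCases with
      | left l =>
        simp only [Fin.append_left]
        cases i using Fin.cases with
        | zero => simp only [Fin.cons_zero]; rw [abs_le]; constructor <;> linarith
        | succ i => simpa using hnear l i
      | right l =>
        simp only [Fin.append_right]
        cases i using Fin.cases with
        | zero => simp only [Fin.cons_zero]; rw [abs_le]; constructor <;> linarith
        | succ i => simpa using hnear l i
    · intro l
      cases l using Fin.addCases with
      | left l =>
        simp only [Fin.append_left]
        exact mul_nonneg hθ0 (hw0 l)
      | right l =>
        simp only [Fin.append_right]
        exact mul_nonneg (by linarith) (hw0 l)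
    · rw [Fin.sum_univ_add]
      simp only [Fin.append_left, Fin.append_right, ← Finset.mul_sum, hw1]
      ring
    · funext i
      have happ : ∀ (k' : ℕ) (w' : Fin k' → ℝ) (f : Fin k' → Fin (n+1) → ℝ) (i : Fin (n+1)),
          (∑ l, w' l • f l) i = ∑ l, w' l * f l i := by
        intro k' w' f i; rw [Finset.sum_apply]; simp
      rw [happ, Fin.sum_univ_add]
      simp only [Fin.append_left, Fin.append_right]
      cases i using Fin.cases with
      | zero =>
        simp only [Fin.cons_zero]
        have : ∀ (q : ℚ) (c : ℝ), ∑ l, c * w l * (q:ℝ) = c * (q:ℝ) := by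
          intro q c
          rw [← Finset.sum_mul, ← Finset.mul_sum, hw1, mul_one]
        rw [this q₁ θ, this q₂ (1-θ)]
        linarith
      | succ i =>
        have hcoord : x i.succ = ∑ l, w l * (p l i : ℝ) := by
          have := congrFun hxeq i
          rw [Finset.sum_apply] at this
          simpa using this
        simp only [Fin.cons_succ]
        rw [show (∑ l, θ * w l * ((p l i : ℝ))) = θ * ∑ l, w l * (p l i:ℝ) by
              rw [Finset.mul_sum]; congr 1; funext l; ring,
            show (∑ l, (1-θ) * w l * ((p l i : ℝ))) = (1-θ) * ∑ l, w l * (p l i:ℝ) by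
              rw [Finset.mul_sum]; congr 1; funext l; ring,
            ← hcoord]
        ring

theorem aux_min_pos {m : ℕ} (f : Fin m → ℝ) (hf : ∀ j, 0 < f j) :
    ∃ ε : ℝ, 0 < ε ∧ ∀ j, ε ≤ f j := by
  rcases isEmpty_or_nonempty (Fin m) with h | h
  · exact ⟨1, one_pos, fun j => absurd j.pos (by simpa using h.elim j)⟩
  · refine ⟨Finset.univ.inf' Finset.univ_nonempty f, ?_, fun j => Finset.inf'_le f (mem_univ j)⟩
    rw [Finset.lt_inf'_iff]
    exact fun j _ => hf j

theorem aux_main (n : ℕ) : ∀ (m : ℕ) (a : Fin m → Fin n → ℚ) (t : Fin m → ℚ) (x : Fin n → ℝ),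
    (∀ j, (t j:ℝ) ≤ ∑ i, (a j i:ℝ) * x i) →
    ∃ (k : ℕ) (p : Fin k → Fin n → ℚ) (w : Fin k → ℝ),
      (∀ l j, (t j:ℝ) ≤ ∑ i, (a j i:ℝ) * (p l i:ℝ)) ∧ (∀ l, 0 ≤ w l) ∧ (∑ l, w l = 1) ∧
      x = ∑ l, w l • fun i => ((p l i:ℝ)) := by
  induction n with
  | zero =>
    intro m a t x hx
    refine ⟨1, fun _ => Fin.elim0, fun _ => 1, fun l j => by simpa using hx j,
      fun l => zero_le_one, by simp, by funext i; exact i.elim0⟩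
  | succ n IH =>
    intro m a t x hx
    by_cases hstrict : ∀ j : Fin m, a j ≠ 0 → (t j:ℝ) < ∑ i, (a j i:ℝ) * x i
    · -- Case A : all nontrivial constraints strict; use a small rational box
      set δ : Fin m → ℝ := fun j =>
        if h : a j = 0 then 1 else ((∑ i, (a j i:ℝ) * x i) - t j) / (∑ i, |(a j i:ℝ)|) with hδ
      have hSpos : ∀ j : Fin m, a j ≠ 0 → 0 < ∑ i, |(a j i:ℝ)| := by
        intro j hj
        obtain ⟨i, hi⟩ := Function.ne_iff.mp hj
        refine Finset.sum_pos' (fun i _ => abs_nonneg _) ⟨i, Finset.mem_univ i, ?_⟩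
        simp only [Pi.zero_apply] at hi
        rw [abs_pos]
        exact_mod_cast hi
      have hδpos : ∀ j, 0 < δ j := by
        intro j
        rw [hδ]
        by_cases h : a j = 0
        · simp [h]
        · simp only [dif_neg h]
          exact div_pos (by linarith [hstrict j h]) (hSpos j h)
      obtain ⟨ε, hε0, hεle⟩ := aux_min_pos δ hδpos
      obtain ⟨k, p, w, hnear, hw0, hw1, hxeq⟩ := aux_box (n+1) x ε hε0
      refine ⟨k, p, w, ?_, hw0, hw1, hxeq⟩
      intro l j
      by_cases h : a j = 0
      · have hz : ∀ i, a j i = 0 := fun i => congrFun h i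
        have h1 : (∑ i, (a j i:ℝ) * (p l i:ℝ)) = 0 := by
          apply Finset.sum_eq_zero; intro i _; rw [hz i]; simp
        have h2 : (∑ i, (a j i:ℝ) * x i) = 0 := by
          apply Finset.sum_eq_zero; intro i _; rw [hz i]; simp
        rw [h1]
        have := hx j; rw [h2] at this; exact this
      · have hS := hSpos j h
        have hεS : ε * (∑ i, |(a j i:ℝ)|) ≤ (∑ i, (a j i:ℝ) * x i) - t j := by
          have h1 := hεle j
          rw [hδ] at h1
          simp only [dif_neg h] at h1
          exact (le_div_iff₀ hS).mp h1
        have hdiff : |(∑ i, (a j i:ℝ) * x i) - ∑ i, (a j i:ℝ) * (p l i:ℝ)|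
            ≤ ε * (∑ i, |(a j i:ℝ)|) := by
          rw [← Finset.sum_sub_distrib]
          refine le_trans (Finset.abs_sum_le_sum_abs _ _) ?_
          rw [Finset.mul_sum]
          refine Finset.sum_le_sum ?_
          intro i _
          rw [show (a j i:ℝ) * x i - (a j i:ℝ) * (p l i:ℝ) = (a j i:ℝ) * (x i - (p l i:ℝ)) by ring,
            abs_mul]
          rw [mul_comm ε]
          refine mul_le_mul_of_nonneg_left ?_ (abs_nonneg _)
          rw [abs_sub_comm]
          exact hnear l i
        have := abs_le.mp hdiff
        linarith
    · -- Case B : some nontrivial constraint is tight; eliminate a variable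
      push_neg at hstrict
      obtain ⟨j₀, hj₀ne, hj₀le⟩ := hstrict
      have heq : (∑ i, (a j₀ i:ℝ) * x i) = (t j₀:ℝ) := le_antisymm hj₀le (hx j₀)
      obtain ⟨i₀, hα⟩ := Function.ne_iff.mp hj₀ne
      simp only [Pi.zero_apply] at hα
      have hαR : ((a j₀ i₀:ℚ):ℝ) ≠ 0 := by exact_mod_cast hα
      set b : Fin m → Fin n → ℚ :=
        fun j i => a j (i₀.succAbove i) - a j i₀ / a j₀ i₀ * a j₀ (i₀.succAbove i) with hb
      set u : Fin m → ℚ := fun j => t j - a j i₀ * t j₀ / a j₀ i₀ with hu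
      set φ : (Fin n → ℝ) → (Fin (n+1) → ℝ) := fun y =>
        i₀.insertNth (((t j₀:ℝ) - ∑ i, (a j₀ (i₀.succAbove i):ℝ) * y i) / (a j₀ i₀:ℝ)) y with hφ
      have hφ0 : ∀ y : Fin n → ℝ,
          φ y i₀ = ((t j₀:ℝ) - ∑ i, (a j₀ (i₀.succAbove i):ℝ) * y i) / (a j₀ i₀:ℝ) := by
        intro y; simp only [hφ, Fin.insertNth_apply_same]
      have hφs : ∀ (y : Fin n → ℝ) (i : Fin n), φ y (i₀.succAbove i) = y i := by
        intro y i; simp only [hφ, Fin.insertNth_apply_succAbove]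
      have key : ∀ (y : Fin n → ℝ) (j : Fin m),
          ∑ i, (a j i:ℝ) * φ y i = ((a j i₀ * t j₀ / a j₀ i₀ : ℚ):ℝ) + ∑ i, (b j i:ℝ) * y i := by
        intro y j
        rw [Fin.sum_univ_succAbove (fun i => (a j i:ℝ) * φ y i) i₀, hφ0]
        simp only [hφs]
        have e1 : ∀ i : Fin n, ((b j i:ℝ)) * y i
            = (a j (i₀.succAbove i):ℝ) * y i
              - (a j i₀:ℝ)/(a j₀ i₀:ℝ) * ((a j₀ (i₀.succAbove i):ℝ) * y i) := by
          intro i; rw [hb]; push_cast; ring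
        rw [Finset.sum_congr rfl fun i _ => e1 i, Finset.sum_sub_distrib, ← Finset.mul_sum]
        push_cast
        ring
      have hxφ : x = φ (fun i => x (i₀.succAbove i)) := by
        funext jj
        by_cases hj : jj = i₀
        · rw [hj, hφ0]
          have hsum := heq
          rw [Fin.sum_univ_succAbove (fun i => (a j₀ i:ℝ) * x i) i₀] at hsum
          field_simp
          linarith [hsum]
        · obtain ⟨i, rfl⟩ := Fin.exists_succAbove_eq hj
          rw [hφs]
      have hy : ∀ j, (u j:ℝ) ≤ ∑ i, (b j i:ℝ) * x (i₀.succAbove i) := by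
        intro j
        have h1 := hx j
        rw [hxφ, key] at h1
        have h3 : (u j : ℝ) = (t j:ℝ) - ((a j i₀ * t j₀ / a j₀ i₀ : ℚ):ℝ) := by
          rw [hu]; push_cast; ring
        linarith
      obtain ⟨k, p, w, hpP, hw0, hw1, hyeq⟩ := IH m b u (fun i => x (i₀.succAbove i)) hy
      set P : Fin k → Fin (n+1) → ℚ := fun l =>
        i₀.insertNth ((t j₀ - ∑ i, a j₀ (i₀.succAbove i) * p l i) / a j₀ i₀) (p l) with hPdef
      have hPl0 : ∀ l, ((P l i₀:ℝ))
          = ((t j₀:ℝ) - ∑ i, (a j₀ (i₀.succAbove i):ℝ) * (p l i:ℝ)) / ((a j₀ i₀:ℝ)) := by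
        intro l
        simp only [hPdef, Fin.insertNth_apply_same]
        push_cast
        ring
      have hPls : ∀ l (i : Fin n), ((P l (i₀.succAbove i) : ℝ)) = ((p l i : ℝ)) := by
        intro l i
        simp only [hPdef, Fin.insertNth_apply_succAbove]
      have hcast : ∀ l, (fun jj => ((P l jj:ℚ):ℝ)) = φ (fun i => (p l i:ℝ)) := by
        intro l; funext jj
        by_cases hj : jj = i₀
        · rw [hj, hφ0, hPl0]
        · obtain ⟨i, rfl⟩ := Fin.exists_succAbove_eq hj
          rw [hφs, hPls]
      refine ⟨k, P, w, ?_, hw0, hw1, ?_⟩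
      · intro l j
        have h2' : ∑ i, (a j i:ℝ) * ((P l i:ℝ))
            = ((a j i₀ * t j₀ / a j₀ i₀ : ℚ):ℝ) + ∑ i, (b j i:ℝ) * (p l i:ℝ) := by
          rw [← key (fun i => (p l i:ℝ)) j]
          exact Finset.sum_congr rfl fun i _ => by rw [congrFun (hcast l) i]
        have h3 : (u j : ℝ) = (t j:ℝ) - ((a j i₀ * t j₀ / a j₀ i₀ : ℚ):ℝ) := by
          rw [hu]; push_cast; ring
        have h4 := hpP l j
        rw [h2']
        linarith
      · rw [hxφ, hyeq]
        funext jj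
        have happ : ∀ (N k' : ℕ) (w' : Fin k' → ℝ) (f : Fin k' → Fin N → ℝ) (i : Fin N),
            (∑ l, w' l • f l) i = ∑ l, w' l * f l i := by
          intro N k' w' f i; rw [Finset.sum_apply]; simp
        by_cases hj : jj = i₀
        · rw [hj]
          have hL : φ (∑ l, w l • fun i => ((p l i:ℚ):ℝ)) i₀
              = ((t j₀:ℝ) - ∑ i, (a j₀ (i₀.succAbove i):ℝ) * (∑ l, w l * ((p l i:ℝ))))
                / ((a j₀ i₀:ℚ):ℝ) := by
            rw [hφ0]
            congr 2
            apply Finset.sum_congr rfl; intro i _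
            congr 1
            exact happ n k w _ i
          have hR : (∑ l, w l • fun i => ((P l i:ℚ):ℝ)) i₀
              = ∑ l, w l * (((t j₀:ℝ) - ∑ i, (a j₀ (i₀.succAbove i):ℝ) * ((p l i:ℝ)))
                / ((a j₀ i₀:ℚ):ℝ)) := by
            rw [happ]
            apply Finset.sum_congr rfl; intro l _
            show w l * ((P l i₀ : ℝ)) = _
            rw [hPl0 l]
          rw [hL, hR]
          have swap : ∑ l, w l * (∑ i, (a j₀ (i₀.succAbove i):ℝ) * (p l i:ℝ))
              = ∑ i, (a j₀ (i₀.succAbove i):ℝ) * (∑ l, w l * (p l i:ℝ)) := by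
            simp_rw [Finset.mul_sum]
            rw [Finset.sum_comm]
            exact Finset.sum_congr rfl fun i _ => Finset.sum_congr rfl fun l _ => by ring
          have sub1 : ∑ l, w l * ((t j₀:ℝ) - (∑ i, (a j₀ (i₀.succAbove i):ℝ) * (p l i:ℝ)))
              = (t j₀:ℝ) - ∑ i, (a j₀ (i₀.succAbove i):ℝ) * (∑ l, w l * (p l i:ℝ)) := by
            rw [Finset.sum_congr rfl fun l (_ : l ∈ Finset.univ) => mul_sub (w l) ((t j₀:ℝ))
                ((∑ i, (a j₀ (i₀.succAbove i):ℝ) * (p l i:ℝ))),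
              Finset.sum_sub_distrib, ← Finset.sum_mul, hw1, one_mul, swap]
          rw [Finset.sum_congr rfl fun l (_ : l ∈ Finset.univ) =>
              (mul_div_assoc (w l) ((t j₀:ℝ) - (∑ i, (a j₀ (i₀.succAbove i):ℝ) * (p l i:ℝ)))
                (((a j₀ i₀:ℚ):ℝ))).symm,
            ← Finset.sum_div, sub1]
        · obtain ⟨i, rfl⟩ := Fin.exists_succAbove_eq hj
          rw [hφs, happ, happ]
          exact Finset.sum_congr rfl fun l _ =>
            show w l * ((p l i:ℝ)) = w l * ((P l (i₀.succAbove i):ℝ)) by rw [hPls l i]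

/-- Every point of a rational polyhedron in `ℝⁿ` (a finite intersection of rational closed
half-spaces `{x : ⟨a, x⟩ ≥ t}` with `a ∈ ℚⁿ`, `t ∈ ℚ`) is a convex combination of finitely many
rational points of the polyhedron. -/
theorem rational_polyhedron_point_convex_comb_of_rational
    (n m : ℕ) (a : Fin m → Fin n → ℚ) (t : Fin m → ℚ)
    (P : Set (Fin n → ℝ))
    (hP : P = {x | ∀ j, (t j : ℝ) ≤ ∑ i, (a j i : ℝ) * x i})
    (x : Fin n → ℝ) (hx : x ∈ P) :
    ∃ (k : ℕ) (p : Fin k → Fin n → ℚ) (w : Fin k → ℝ),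
      (∀ l, (fun i => ((p l i : ℝ))) ∈ P) ∧ (∀ l, 0 ≤ w l) ∧ (∑ l, w l = 1) ∧
      x = ∑ l, w l • fun i => ((p l i : ℝ)) := by
  subst hP
  obtain ⟨k, p, w, hpP, hw0, hw1, hxeq⟩ := aux_main n m a t x hx
  exact ⟨k, p, w, fun l => fun j => hpP l j, hw0, hw1, hxeq⟩
end

section
/- Let I be a finite set, π = {α_i : i ∈ I} linearly independent vectors in a real vector space 𝔥*, and fix a subset J ⊆ I. Define, for λ, ν ∈ 𝔥*: ν ≤_J λ iff (1) λ − ν ∈ ℝ≥0·π and (2) writing λ − ν = β_J + β_{I∖J} with β_J ∈ ℝ≥0·π_J and β_{I∖J} ∈ ℝ≥0·π_{I∖J}, for every connected component C of supp(β_J) (connectivity with respect to a fixed Dynkin-diagram graph on I) there exists c ∈ C with ⟨α̌_c, λ − β_{I∖J}⟩ > 0, where α̌_c are fixed coroots. Then the relation ≤_J is transitive: if μ ≤_J ν and ν ≤_J λ then μ ≤_J λ. -/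
open Finset

/-!
Add the two decompositions: `λ - μ = (β_J + β'_J) + (β_{I∖J} + β'_{I∖J})`, where `ν - μ` contributes
`β_J + β_{I∖J}` and `λ - ν` contributes `β'_J + β'_{I∖J}`. Let `C` be a component of
`supp (β_J + β'_J)`.

If `C` meets `supp β'_J`, it contains a whole component of `supp β'_J`, hence a node `c' ∈ J` with
`⟨α̌_{c'}, λ - β'_{I∖J}⟩ > 0`. Subtracting `β_{I∖J}`, a nonnegative combination of roots `α_i`
with `i ∉ J`, can only increase this pairing, because off-diagonal Cartan entries are `≤ 0`.

Otherwise `C` is a component of `supp β_J` and contains a node `c'` with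
`⟨α̌_{c'}, ν - β_{I∖J}⟩ > 0`. No node of `supp β'_J` is adjacent to `c'`, since it would then lie
in `C`, so `⟨α̌_{c'}, β'_J⟩ = 0`, and `λ - β_{I∖J} - β'_{I∖J} = ν - β_{I∖J} + β'_J`.
-/

/-- The `J`-nondegeneracy relation `ν ≤_J λ`: `λ - ν` is a nonnegative real combination of the
simple roots, and writing `λ - ν = β_J + β_{I∖J}`, every connected component of `supp β_J`
(connectivity in the Dynkin diagram: `x ~ y` iff `x ≠ y` and `⟨α̌_x, α_y⟩ ≠ 0`) contains a node
`c` with `⟨α̌_c, λ - β_{I∖J}⟩ > 0`. -/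
def leJ {ι H : Type*} [Fintype ι] [AddCommGroup H] [Module ℝ H]
    (α : ι → H) (coroot : ι → (H →ₗ[ℝ] ℝ)) (J : Set ι) (ν lam : H) : Prop :=
  ∃ kJ kC : ι → ℝ,
    (∀ i, 0 ≤ kJ i) ∧ (∀ i, 0 ≤ kC i) ∧
    (∀ i, i ∉ J → kJ i = 0) ∧ (∀ i, i ∈ J → kC i = 0) ∧
    lam - ν = (∑ i, kJ i • α i) + (∑ i, kC i • α i) ∧
    (∀ c, kJ c ≠ 0 →
      ∃ c', Relation.ReflTransGen
          (fun x y => kJ x ≠ 0 ∧ kJ y ≠ 0 ∧ x ≠ y ∧ coroot x (α y) ≠ 0) c c' ∧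
        0 < coroot c' (lam - ∑ i, kC i • α i))

section

variable {ι H : Type*} [AddCommGroup H] [Module ℝ H] (α : ι → H) (coroot : ι → (H →ₗ[ℝ] ℝ))

def supportAdj (k : ι → ℝ) (x y : ι) : Prop :=
  k x ≠ 0 ∧ k y ≠ 0 ∧ x ≠ y ∧ coroot x (α y) ≠ 0

variable {α coroot}

theorem supportAdj.ne_zero_of_reflTransGen {k : ι → ℝ} {x y : ι}
    (h : Relation.ReflTransGen (supportAdj α coroot k) x y) (hx : k x ≠ 0) : k y ≠ 0 := by
  rcases h.cases_tail with rfl | ⟨_, _, hzy⟩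
  exacts [hx, hzy.2.1]

theorem supportAdj.reflTransGen_mono {k k' : ι → ℝ} (hsupp : ∀ i, k i ≠ 0 → k' i ≠ 0) {x y : ι}
    (h : Relation.ReflTransGen (supportAdj α coroot k) x y) :
    Relation.ReflTransGen (supportAdj α coroot k') x y :=
  Relation.ReflTransGen.mono (fun _ _ ⟨hx, hy, hne⟩ => ⟨hsupp _ hx, hsupp _ hy, hne⟩) _ _ h

theorem coroot_eq_zero_of_not_reflTransGen {k : ι → ℝ} {c c' i : ι}
    (hcc' : Relation.ReflTransGen (supportAdj α coroot k) c c') (hc : k c ≠ 0) (hi : k i ≠ 0)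
    (hci : ¬ Relation.ReflTransGen (supportAdj α coroot k) c i) : coroot c' (α i) = 0 := by
  by_contra hco
  have hne : c' ≠ i := by
    rintro rfl
    exact hci hcc'
  exact hci (hcc'.tail ⟨supportAdj.ne_zero_of_reflTransGen hcc' hc, hi, hne, hco⟩)

variable [Fintype ι]

theorem coroot_sum_smul_nonpos {k : ι → ℝ} {c : ι} (hoff : ∀ i, c ≠ i → coroot c (α i) ≤ 0)
    (hk : ∀ i, 0 ≤ k i) (hc : k c = 0) : coroot c (∑ i, k i • α i) ≤ 0 := by
  rw [map_sum]
  refine sum_nonpos fun i _ => ?_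
  rw [map_smul, smul_eq_mul]
  obtain rfl | hci := eq_or_ne c i
  · rw [hc, zero_mul]
  · exact mul_nonpos_of_nonneg_of_nonpos (hk i) (hoff i hci)

theorem coroot_sum_smul_eq_zero {k : ι → ℝ} {c : ι}
    (h : ∀ i, k i ≠ 0 → coroot c (α i) = 0) : coroot c (∑ i, k i • α i) = 0 := by
  rw [map_sum]
  refine sum_eq_zero fun i _ => ?_
  rw [map_smul, smul_eq_mul]
  obtain hi | hi := eq_or_ne (k i) 0
  · rw [hi, zero_mul]
  · rw [h i hi, mul_zero]

theorem sum_add_smul (k k' : ι → ℝ) :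
    ∑ i, (k + k') i • α i = ∑ i, k i • α i + ∑ i, k' i • α i := by
  simp only [Pi.add_apply, add_smul, sum_add_distrib]

end

theorem leJ_trans_general {ι H : Type*} [Fintype ι] [AddCommGroup H] [Module ℝ H]
    (α : ι → H) (coroot : ι → (H →ₗ[ℝ] ℝ)) (J : Set ι)
    (hoff : ∀ i j, i ≠ j → coroot i (α j) ≤ 0)
    (μ ν lam : H) (h1 : leJ α coroot J μ ν) (h2 : leJ α coroot J ν lam) :
    leJ α coroot J μ lam := by
  obtain ⟨k₁, b₁, hk₁, hb₁, hk₁J, hb₁J, hsum₁, hcomp₁⟩ := h1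
  obtain ⟨k₂, b₂, hk₂, hb₂, hk₂J, hb₂J, hsum₂, hcomp₂⟩ := h2
  have hsupp : ∀ i, (k₁ + k₂) i ≠ 0 ↔ k₁ i ≠ 0 ∨ k₂ i ≠ 0 := fun i => by
    rw [Pi.add_apply, ne_eq, add_eq_zero_iff_of_nonneg (hk₁ i) (hk₂ i), not_and_or]
  refine ⟨k₁ + k₂, b₁ + b₂, fun i => add_nonneg (hk₁ i) (hk₂ i),
    fun i => add_nonneg (hb₁ i) (hb₂ i), fun i hi => by simp [hk₁J i hi, hk₂J i hi],
    fun i hi => by simp [hb₁J i hi, hb₂J i hi], ?_, fun c hc => ?_⟩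
  · rw [← sub_add_sub_cancel lam ν μ, hsum₁, hsum₂, sum_add_smul, sum_add_smul]
    abel
  by_cases hreach : ∃ d, Relation.ReflTransGen (supportAdj α coroot (k₁ + k₂)) c d ∧ k₂ d ≠ 0
  · obtain ⟨d, hcd, hd⟩ := hreach
    obtain ⟨c', hdc', hpos⟩ := hcomp₂ d hd
    have hc' : k₂ c' ≠ 0 := supportAdj.ne_zero_of_reflTransGen hdc' hd
    have hc'J : c' ∈ J := of_not_not fun h => hc' (hk₂J c' h)
    have hle := coroot_sum_smul_nonpos (hoff c') hb₁ (hb₁J c' hc'J)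
    have hdc'' := supportAdj.reflTransGen_mono (fun i hi => (hsupp i).2 (.inr hi)) hdc'
    refine ⟨c', hcd.trans hdc'', ?_⟩
    rw [sum_add_smul, ← sub_sub, sub_right_comm, map_sub]
    linarith
  · push Not at hreach
    have hc₁ : k₁ c ≠ 0 := by simpa [hreach c .refl] using hc
    obtain ⟨c', hcc', hpos⟩ := hcomp₁ c hc₁
    replace hcc' := supportAdj.reflTransGen_mono (fun i hi => (hsupp i).2 (.inl hi)) hcc'
    have horth : coroot c' (∑ i, k₂ i • α i) = 0 := coroot_sum_smul_eq_zero fun i hi =>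
      coroot_eq_zero_of_not_reflTransGen hcc' hc ((hsupp i).2 (.inr hi))
        fun hci => hi (hreach i hci)
    refine ⟨c', hcc', ?_⟩
    have hlam : lam - ∑ i, (b₁ + b₂) i • α i = (ν - ∑ i, b₁ i • α i) + ∑ i, k₂ i • α i := by
      rw [sum_add_smul, ← sub_add_cancel lam ν, hsum₂]
      abel
    rwa [hlam, map_add, horth, add_zero]

/-- The relation `≤_J` is transitive. -/
theorem leJ_trans {ι H : Type*} [Fintype ι] [AddCommGroup H] [Module ℝ H]
    (α : ι → H) (coroot : ι → (H →ₗ[ℝ] ℝ)) (J : Set ι)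
    (hind : LinearIndependent ℝ α)
    (hdiag : ∀ i, coroot i (α i) = 2)
    (hoff : ∀ i j, i ≠ j → coroot i (α j) ≤ 0)
    (hsym : ∀ i j, coroot i (α j) = 0 ↔ coroot j (α i) = 0)
    (μ ν lam : H) (h1 : leJ α coroot J μ ν) (h2 : leJ α coroot J ν lam) :
    leJ α coroot J μ lam :=
  leJ_trans_general α coroot J hoff μ ν lam h1 h2
end

section
/- With notation as in the definition of ≤_J (the J-nondegeneracy order), for any λ in the J-dominant chamber D_J = {μ : ⟨α̌_j, μ⟩ ≥ 0 ∀ j ∈ J}, the set {ν ∈ 𝔥* : ν ≤_J λ} is convex, and is a cone with vertex λ, i.e. closed under the maps ν ↦ λ + t(ν − λ) for all t ≥ 0. -/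
/-! If `ν₁, ν₂ ≤_J λ` with data `(k₁, m₁)` and `(k₂, m₂)`, then `λ + a(ν₁ - λ) + b(ν₂ - λ)` has
data `(a k₁ + b k₂, a m₁ + b m₂)` for `a, b ≥ 0`. Enlarging the support only adds edges to the
diagram, so connectivity is kept; and at a node `j ∈ J` every term of
`⟨α̌_j, λ - ∑ m_i α_i⟩ = ⟨α̌_j, λ⟩ - ∑ m_i ⟨α̌_j, α_i⟩` is nonnegative, as `λ` is `J`-dominant and
`m` is supported off `J`, so positivity at the endpoint of a chain survives. Convexity and the
cone property are the cases `a + b = 1` and `b = 0`. -/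

open Finset

section

variable {ι H : Type*} [AddCommGroup H] [Module ℝ H]
  {α : ι → H} {coroot : ι → (H →ₗ[ℝ] ℝ)} {J : Set ι}

/-- The relation inside `leJ`: its chains from `c` reach the connected component of `c` in the
Dynkin diagram of `supp k`. -/
def SuppAdj (α : ι → H) (coroot : ι → (H →ₗ[ℝ] ℝ)) (k : ι → ℝ) (x y : ι) : Prop :=
  k x ≠ 0 ∧ k y ≠ 0 ∧ x ≠ y ∧ coroot x (α y) ≠ 0

lemma SuppAdj.mono {k k' : ι → ℝ} (hkk' : ∀ i, k i ≠ 0 → k' i ≠ 0) {x y : ι}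
    (h : SuppAdj α coroot k x y) : SuppAdj α coroot k' x y :=
  ⟨hkk' x h.1, hkk' y h.2.1, h.2.2⟩

lemma ne_zero_of_reflTransGen_suppAdj {k : ι → ℝ} {c c' : ι}
    (h : Relation.ReflTransGen (SuppAdj α coroot k) c c') (hc : k c ≠ 0) : k c' ≠ 0 := by
  induction h with
  | refl => exact hc
  | tail _ hadj _ => exact hadj.2.1

lemma coroot_sum_nonpos [Fintype ι] (hoff : ∀ i j, i ≠ j → coroot i (α j) ≤ 0)
    {m : ι → ℝ} (hm : ∀ i, 0 ≤ m i) (hmJ : ∀ i ∈ J, m i = 0) {j : ι} (hj : j ∈ J) :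
    coroot j (∑ i, m i • α i) ≤ 0 := by
  rw [map_sum]
  refine sum_nonpos fun i _ => ?_
  rw [map_smul, smul_eq_mul]
  by_cases hi : i ∈ J
  · simp [hmJ i hi]
  · exact mul_nonpos_of_nonneg_of_nonpos (hm i) (hoff j i (ne_of_mem_of_not_mem hj hi))

lemma coroot_sub_sum_smul_add_pos [Fintype ι] (hoff : ∀ i j, i ≠ j → coroot i (α j) ≤ 0)
    {lam : H} (hlam : ∀ j ∈ J, 0 ≤ coroot j lam)
    {m₁ m₂ : ι → ℝ} (hm₁ : ∀ i, 0 ≤ m₁ i) (hm₂ : ∀ i, 0 ≤ m₂ i)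
    (hm₁J : ∀ i ∈ J, m₁ i = 0) (hm₂J : ∀ i ∈ J, m₂ i = 0)
    {a : ℝ} (ha : 0 < a) {j : ι} (hj : j ∈ J) (hpos : 0 < coroot j (lam - ∑ i, m₁ i • α i)) :
    0 < coroot j (lam - ∑ i, (a * m₁ i + m₂ i) • α i) := by
  have hsum : ∑ i, (a * m₁ i + m₂ i) • α i = a • ∑ i, m₁ i • α i + ∑ i, m₂ i • α i := by
    simp only [add_smul, mul_smul, sum_add_distrib, smul_sum]
  have hA := hlam j hj
  have hS₁ := coroot_sum_nonpos hoff hm₁ hm₁J hj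
  have hS₂ := coroot_sum_nonpos hoff hm₂ hm₂J hj
  rw [map_sub] at hpos
  rw [hsum, map_sub, map_add, map_smul, smul_eq_mul]
  rcases hA.lt_or_eq with hA | hA
  · linarith [mul_nonpos_of_nonneg_of_nonpos ha.le hS₁]
  · linarith [mul_neg_of_pos_of_neg ha (by linarith : coroot j (∑ i, m₁ i • α i) < 0)]

lemma exists_chain_of_smul_add [Fintype ι] (hoff : ∀ i j, i ≠ j → coroot i (α j) ≤ 0)
    {lam : H} (hlam : ∀ j ∈ J, 0 ≤ coroot j lam)
    {k₁ k₂ m₁ m₂ kJ kC : ι → ℝ} (hk₁ : ∀ i, 0 ≤ k₁ i) (hk₂ : ∀ i, 0 ≤ k₂ i)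
    (hm₁ : ∀ i, 0 ≤ m₁ i) (hm₂ : ∀ i, 0 ≤ m₂ i) (hk₁J : ∀ i, i ∉ J → k₁ i = 0)
    (hm₁J : ∀ i ∈ J, m₁ i = 0) (hm₂J : ∀ i ∈ J, m₂ i = 0)
    (hchain : ∀ c, k₁ c ≠ 0 → ∃ c', Relation.ReflTransGen (SuppAdj α coroot k₁) c c' ∧
      0 < coroot c' (lam - ∑ i, m₁ i • α i))
    {a : ℝ} (ha : 0 < a) (hkJ : ∀ i, kJ i = a * k₁ i + k₂ i) (hkC : ∀ i, kC i = a * m₁ i + m₂ i)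
    {c : ι} (hc : k₁ c ≠ 0) :
    ∃ c', Relation.ReflTransGen (SuppAdj α coroot kJ) c c' ∧
      0 < coroot c' (lam - ∑ i, kC i • α i) := by
  obtain ⟨c', hcc', hpos⟩ := hchain c hc
  have hsupp : ∀ i, k₁ i ≠ 0 → kJ i ≠ 0 := fun i hi => by
    rw [hkJ]
    exact (add_pos_of_pos_of_nonneg (mul_pos ha ((hk₁ i).lt_of_ne' hi)) (hk₂ i)).ne'
  have hc'J : c' ∈ J := by
    by_contra h
    exact ne_zero_of_reflTransGen_suppAdj hcc' hc (hk₁J c' h)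
  refine ⟨c', Relation.ReflTransGen.mono (fun _ _ => SuppAdj.mono hsupp) _ _ hcc', ?_⟩
  simp only [hkC]
  exact coroot_sub_sum_smul_add_pos hoff hlam hm₁ hm₂ hm₁J hm₂J ha hc'J hpos

theorem leJ_add_smul_sub_add_smul_sub [Fintype ι] (hoff : ∀ i j, i ≠ j → coroot i (α j) ≤ 0)
    {lam ν₁ ν₂ : H} (hlam : ∀ j ∈ J, 0 ≤ coroot j lam)
    (h₁ : leJ α coroot J ν₁ lam) (h₂ : leJ α coroot J ν₂ lam) {a b : ℝ} (ha : 0 ≤ a)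
    (hb : 0 ≤ b) : leJ α coroot J (lam + a • (ν₁ - lam) + b • (ν₂ - lam)) lam := by
  obtain ⟨k₁, m₁, hk₁, hm₁, hk₁J, hm₁J, heq₁, hchain₁⟩ := h₁
  obtain ⟨k₂, m₂, hk₂, hm₂, hk₂J, hm₂J, heq₂, hchain₂⟩ := h₂
  have hak₁ : ∀ i, 0 ≤ a * k₁ i := fun i => mul_nonneg ha (hk₁ i)
  have hbk₂ : ∀ i, 0 ≤ b * k₂ i := fun i => mul_nonneg hb (hk₂ i)
  have ham₁ : ∀ i, 0 ≤ a * m₁ i := fun i => mul_nonneg ha (hm₁ i)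
  have hbm₂ : ∀ i, 0 ≤ b * m₂ i := fun i => mul_nonneg hb (hm₂ i)
  refine ⟨fun i => a * k₁ i + b * k₂ i, fun i => a * m₁ i + b * m₂ i,
    fun i => add_nonneg (hak₁ i) (hbk₂ i), fun i => add_nonneg (ham₁ i) (hbm₂ i),
    fun i hi => by simp [hk₁J i hi, hk₂J i hi], fun i hi => by simp [hm₁J i hi, hm₂J i hi],
    ?_, fun c hc => ?_⟩
  · have hdiff : lam - (lam + a • (ν₁ - lam) + b • (ν₂ - lam))
        = a • (lam - ν₁) + b • (lam - ν₂) := by module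
    rw [hdiff, heq₁, heq₂]
    simp only [add_smul, mul_smul, sum_add_distrib, smul_add, smul_sum]
    abel
  · rcases ne_or_eq (a * k₁ c) 0 with hac | hac
    · exact exists_chain_of_smul_add hoff hlam hk₁ hbk₂ hm₁ hbm₂ hk₁J hm₁J
        (fun i hi => by simp [hm₂J i hi]) hchain₁ (ha.lt_of_ne' (left_ne_zero_of_mul hac))
        (fun _ => rfl) (fun _ => rfl) (right_ne_zero_of_mul hac)
    · have hbc : b * k₂ c ≠ 0 := by simpa [hac] using hc
      exact exists_chain_of_smul_add hoff hlam hk₂ hak₁ hm₂ ham₁ hk₂J hm₂J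
        (fun i hi => by simp [hm₁J i hi]) hchain₂ (hb.lt_of_ne' (left_ne_zero_of_mul hbc))
        (fun _ => add_comm _ _) (fun _ => add_comm _ _) (right_ne_zero_of_mul hbc)

end

theorem leJ_set_convex_cone_general {ι H : Type*} [Fintype ι] [AddCommGroup H] [Module ℝ H]
    (α : ι → H) (coroot : ι → (H →ₗ[ℝ] ℝ)) (J : Set ι)
    (hoff : ∀ i j, i ≠ j → coroot i (α j) ≤ 0)
    (lam : H) (hlam : ∀ j ∈ J, 0 ≤ coroot j lam) :
    Convex ℝ {ν : H | leJ α coroot J ν lam} ∧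
    (∀ ν ∈ {ν : H | leJ α coroot J ν lam}, ∀ t : ℝ, 0 ≤ t →
      lam + t • (ν - lam) ∈ {ν : H | leJ α coroot J ν lam}) := by
  refine ⟨fun ν₁ h₁ ν₂ h₂ a b ha hb hab => ?_, fun ν h t ht => ?_⟩
  · have hcomb : a • ν₁ + b • ν₂ = lam + a • (ν₁ - lam) + b • (ν₂ - lam) := by
      linear_combination (norm := module) hab • lam
    rw [Set.mem_ofPred_eq, hcomb]
    exact leJ_add_smul_sub_add_smul_sub hoff hlam h₁ h₂ ha hb
  · simpa using leJ_add_smul_sub_add_smul_sub hoff hlam h h ht le_rfl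

/-- For `λ` in the `J`-dominant chamber, the set `{ν : ν ≤_J λ}` is convex and is a cone with
vertex `λ`, i.e. closed under `ν ↦ λ + t(ν - λ)` for all `t ≥ 0`. -/
theorem leJ_set_convex_cone {ι H : Type*} [Fintype ι] [AddCommGroup H] [Module ℝ H]
    (α : ι → H) (coroot : ι → (H →ₗ[ℝ] ℝ)) (J : Set ι)
    (hind : LinearIndependent ℝ α)
    (hdiag : ∀ i, coroot i (α i) = 2)
    (hoff : ∀ i j, i ≠ j → coroot i (α j) ≤ 0)
    (hsym : ∀ i j, coroot i (α j) = 0 ↔ coroot j (α i) = 0)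
    (lam : H) (hlam : ∀ j ∈ J, 0 ≤ coroot j lam) :
    Convex ℝ {ν : H | leJ α coroot J ν lam} ∧
    (∀ ν ∈ {ν : H | leJ α coroot J ν lam}, ∀ t : ℝ, 0 ≤ t →
      lam + t • (ν - lam) ∈ {ν : H | leJ α coroot J ν lam}) :=
  leJ_set_convex_cone_general α coroot J hoff lam hlam
end

section
/- Let C be a convex subset of a finite-dimensional real vector space E whose intersection with every polytope is a polytope (C is locally polyhedral). Then C is closed. -/
/-!
Closedness is a local property, and every point of `E` has a polytope `Q` as a neighbourhood
(a small simplex around it). Near that point `C` agrees with `C ∩ Q`, which is a polytope,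
hence compact and in particular closed.
-/

open Topology

theorem isClosed_of_forall_exists_mem_nhds_isClosed_inter {X : Type*} [TopologicalSpace X]
    {s : Set X} (h : ∀ x ∈ closure s, ∃ N ∈ 𝓝 x, IsClosed (s ∩ N)) : IsClosed s := by
  refine closure_subset_iff_isClosed.mp fun x hx => ?_
  obtain ⟨N, hN, hclosed⟩ := h x hx
  have hx' : x ∈ closure (s ∩ N) := by
    rw [mem_closure_iff_nhdsWithin_neBot, ← nhdsWithin_restrict' s hN]
    exact mem_closure_iff_nhdsWithin_neBot.mp hx
  exact (hclosed.closure_subset hx').1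

theorem exists_finset_convexHull_mem_nhds {E : Type*} [NormedAddCommGroup E] [NormedSpace ℝ E]
    [FiniteDimensional ℝ E] (x : E) : ∃ F : Finset E, convexHull ℝ (F : Set E) ∈ 𝓝 x := by
  classical
  obtain ⟨b, hxb, -⟩ := exists_mem_interior_convexHull_affineBasis
    (Filter.univ_mem : Set.univ ∈ 𝓝 x)
  refine ⟨Finset.univ.image b, ?_⟩
  rw [Finset.coe_image, Finset.coe_univ, Set.image_univ]
  exact mem_interior_iff_mem_nhds.mp hxb

theorem locally_polyhedral_closed_general {E : Type*}
    [NormedAddCommGroup E] [NormedSpace ℝ E] [FiniteDimensional ℝ E]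
    (C : Set E)
    (hloc : ∀ Q : Set E, (∃ F : Finset E, Q = convexHull ℝ (F : Set E)) →
      ∃ G : Finset E, C ∩ Q = convexHull ℝ (G : Set E)) :
    IsClosed C := by
  refine isClosed_of_forall_exists_mem_nhds_isClosed_inter fun x _ => ?_
  obtain ⟨F, hF⟩ := exists_finset_convexHull_mem_nhds x
  obtain ⟨G, hG⟩ := hloc _ ⟨F, rfl⟩
  exact ⟨_, hF, hG ▸ G.finite_toSet.isClosed_convexHull (𝕜 := ℝ)⟩

/-- A convex subset of a finite-dimensional real vector space whose intersection with every
polytope (convex hull of a finite set) is a polytope, is closed. -/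
theorem locally_polyhedral_closed {E : Type*}
    [NormedAddCommGroup E] [NormedSpace ℝ E] [FiniteDimensional ℝ E]
    (C : Set E) (hC : Convex ℝ C)
    (hloc : ∀ Q : Set E, (∃ F : Finset E, Q = convexHull ℝ (F : Set E)) →
      ∃ G : Finset E, C ∩ Q = convexHull ℝ (G : Set E)) :
    IsClosed C :=
  locally_polyhedral_closed_general C hloc
end
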